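/- Let the test statistic under hypothesis H₀ and H₁ be Gaussian with means μ₀, μ₁ and variances v₀, v₁ respectively. Then the area under the ROC curve, defined as A = −∫_{−∞}^{∞} P_D(λ)·(d P_F(λ)/dλ) dλ with P_F(λ) = Q((λ−μ₀)/√v₀) and P_D(λ) = Q((λ−μ₁)/√v₁), equals Q(a/√(b²+1)) where a = (μ₀ − μ₁)/√v₁ and b = √(v₀/v₁). -/

import Mathlib

/-!
Since `-P_F'` is the density of `N(μ₀, v₀)` and `P_D(λ) = P(Y > λ)` for `Y ~ N(μ₁, v₁)`, the area
is `A = P(X < Y)` for independent `X ~ N(μ₀, v₀)` and `Y ~ N(μ₁, v₁)`. The law of `Y - X` is the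
convolution `N(μ₁ - μ₀, v₀ + v₁)`, so `A = Q((μ₀ - μ₁) / √(v₀ + v₁))`, and
`a / √(b² + 1) = (μ₀ - μ₁) / √(v₀ + v₁)`.
-/

open MeasureTheory Real

/-- The Gaussian tail function `Q(x) = (1/√(2π)) ∫_x^∞ exp(−t²/2) dt`. -/
noncomputable def gaussQ (x : ℝ) : ℝ :=
  (Real.sqrt (2 * Real.pi))⁻¹ * ∫ t in Set.Ioi x, Real.exp (-t ^ 2 / 2)

open Set ProbabilityTheory
open scoped NNReal

theorem hasDerivAt_setIntegral_Ioi {E : Type*} [NormedAddCommGroup E] [NormedSpace ℝ E]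
    [CompleteSpace E] {f : ℝ → E} (hf : Integrable f) {x : ℝ} (hx : ContinuousAt f x) :
    HasDerivAt (fun y => ∫ t in Ioi y, f t) (-f x) x := by
  have h : (fun y => ∫ t in Ioi y, f t) = fun y => (∫ t in Ioi 0, f t) - ∫ t in 0..y, f t := by
    ext y
    rw [← intervalIntegral.integral_Ioi_sub_Ioi' hf.integrableOn hf.integrableOn, sub_sub_cancel]
  rw [h, ← zero_sub]
  exact (hasDerivAt_const x _).sub (intervalIntegral.integral_hasDerivAt_right
    hf.intervalIntegrable hf.aestronglyMeasurable.stronglyMeasurableAtFilter hx)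

theorem measureReal_gaussianReal (μ : ℝ) {v : ℝ≥0} (hv : v ≠ 0) (s : Set ℝ) :
    (gaussianReal μ v).real s = ∫ x in s, gaussianPDFReal μ v x := by
  rw [measureReal_def, gaussianReal_apply_eq_integral μ hv,
    ENNReal.toReal_ofReal (integral_nonneg fun x => gaussianPDFReal_nonneg μ v x)]

theorem gaussQ_eq_measureReal_Ioi (x : ℝ) : gaussQ x = (gaussianReal 0 1).real (Ioi x) := by
  rw [measureReal_gaussianReal 0 one_ne_zero, gaussQ, ← integral_const_mul]
  simp [gaussianPDFReal]

theorem gaussianReal_eq_map_affine (μ : ℝ) (v : ℝ≥0) :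
    gaussianReal μ v = (gaussianReal 0 1).map (fun t => μ + √v * t) := by
  change _ = (gaussianReal 0 1).map ((μ + ·) ∘ (√v * ·))
  rw [← Measure.map_map (measurable_const_add μ) (measurable_const_mul _),
    gaussianReal_map_const_mul, gaussianReal_map_const_add]
  congr
  · simp
  · ext; simp

theorem measureReal_gaussianReal_Ioi (μ : ℝ) {v : ℝ≥0} (hv : v ≠ 0) (x : ℝ) :
    (gaussianReal μ v).real (Ioi x) = gaussQ ((x - μ) / √v) := by
  have hσ : 0 < √(v : ℝ) := by positivity
  rw [gaussianReal_eq_map_affine, map_measureReal_apply (by fun_prop) measurableSet_Ioi,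
    gaussQ_eq_measureReal_Ioi]
  congr 1
  ext t
  simp only [mem_preimage, mem_Ioi, div_lt_iff₀ hσ]
  constructor <;> intro h <;> linarith

theorem hasDerivAt_measureReal_gaussianReal_Ioi (μ : ℝ) {v : ℝ≥0} (hv : v ≠ 0) (x : ℝ) :
    HasDerivAt (fun y => (gaussianReal μ v).real (Ioi y)) (-gaussianPDFReal μ v x) x := by
  simp_rw [measureReal_gaussianReal μ hv]
  exact hasDerivAt_setIntegral_Ioi (integrable_gaussianPDFReal μ v)
    (by unfold gaussianPDFReal; fun_prop)

theorem lintegral_measure_Ioi_eq_map_neg_conv (μ ν : Measure ℝ) [SFinite ν] :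
    ∫⁻ x, ν (Ioi x) ∂μ = (μ.map (fun x => -x) ∗ ν) (Ioi 0) := by
  rw [Measure.conv, Measure.map_apply (by fun_prop) measurableSet_Ioi,
    Measure.prod_apply (measurableSet_Ioi.preimage (by fun_prop)),
    lintegral_map (measurable_measure_prodMk_left (measurableSet_Ioi.preimage (by fun_prop)))
      (by fun_prop)]
  congr with x
  congr with y
  simp

theorem integral_measureReal_Ioi_eq_map_neg_conv (μ ν : Measure ℝ) [IsFiniteMeasure ν] :
    ∫ x, ν.real (Ioi x) ∂μ = (μ.map (fun x => -x) ∗ ν).real (Ioi 0) := by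
  have hmeas : Measurable fun x => ν (Ioi x) :=
    Antitone.measurable fun _ _ h => measure_mono (Ioi_subset_Ioi h)
  simp_rw [measureReal_def]
  rw [← lintegral_measure_Ioi_eq_map_neg_conv,
    integral_toReal hmeas.aemeasurable (ae_of_all _ fun _ => measure_lt_top ν _)]

theorem integral_measureReal_Ioi_mul_gaussianPDFReal (μ₀ μ₁ : ℝ) {v₀ : ℝ≥0} (hv₀ : v₀ ≠ 0)
    (v₁ : ℝ≥0) :
    ∫ x, (gaussianReal μ₁ v₁).real (Ioi x) * gaussianPDFReal μ₀ v₀ x =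
      (gaussianReal (μ₁ - μ₀) (v₀ + v₁)).real (Ioi 0) := by
  simp_rw [mul_comm _ (gaussianPDFReal μ₀ v₀ _), ← smul_eq_mul,
    ← integral_gaussianReal_eq_integral_smul hv₀, integral_measureReal_Ioi_eq_map_neg_conv,
    gaussianReal_map_neg, gaussianReal_conv_gaussianReal, neg_add_eq_sub]

/-- For Gaussian test statistics with means `μ₀, μ₁` and variances `v₀, v₁`,
the area under the ROC curve
`A = −∫ P_D(λ) (d P_F(λ)/dλ) dλ`, with `P_F(λ) = Q((λ−μ₀)/√v₀)` and
`P_D(λ) = Q((λ−μ₁)/√v₁)`, equals `Q(a/√(b²+1))`, where `a = (μ₀−μ₁)/√v₁`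
and `b = √(v₀/v₁)`. -/
theorem auc_of_roc (μ₀ μ₁ v₀ v₁ : ℝ) (hv₀ : 0 < v₀) (hv₁ : 0 < v₁)
    (P_F P_D : ℝ → ℝ)
    (hPF : ∀ lam, P_F lam = gaussQ ((lam - μ₀) / Real.sqrt v₀))
    (hPD : ∀ lam, P_D lam = gaussQ ((lam - μ₁) / Real.sqrt v₁))
    (A a b : ℝ)
    (hA : A = -∫ lam : ℝ, P_D lam * deriv P_F lam)
    (ha : a = (μ₀ - μ₁) / Real.sqrt v₁)
    (hb : b = Real.sqrt (v₀ / v₁)) :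
    A = gaussQ (a / Real.sqrt (b ^ 2 + 1)) := by
  set w₀ : ℝ≥0 := ⟨v₀, hv₀.le⟩
  set w₁ : ℝ≥0 := ⟨v₁, hv₁.le⟩
  have hw₀ : w₀ ≠ 0 := ne_of_gt hv₀
  have hw₁ : w₁ ≠ 0 := ne_of_gt hv₁
  have hPF' : P_F = fun lam => (gaussianReal μ₀ w₀).real (Ioi lam) :=
    funext fun lam => (hPF lam).trans (measureReal_gaussianReal_Ioi μ₀ hw₀ lam).symm
  have hPD' : P_D = fun lam => (gaussianReal μ₁ w₁).real (Ioi lam) :=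
    funext fun lam => (hPD lam).trans (measureReal_gaussianReal_Ioi μ₁ hw₁ lam).symm
  have harg : a / √(b ^ 2 + 1) = (0 - (μ₁ - μ₀)) / √(w₀ + w₁ : ℝ≥0) := by
    change _ = _ / √(v₀ + v₁)
    rw [ha, hb, sq_sqrt (by positivity), show v₀ / v₁ + 1 = (v₀ + v₁) / v₁ by field_simp,
      sqrt_div (by positivity)]
    field_simp
    ring
  have hw : w₀ + w₁ ≠ 0 := fun h => hw₀ (add_eq_zero.mp h).1
  simp_rw [hA, hPF', hPD', (hasDerivAt_measureReal_gaussianReal_Ioi μ₀ hw₀ _).deriv, mul_neg]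
  rw [integral_neg, neg_neg, integral_measureReal_Ioi_mul_gaussianPDFReal μ₀ μ₁ hw₀,
    measureReal_gaussianReal_Ioi _ hw, harg]
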